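/- Let M = SU_2 with contact element Z = iH_α, where α is the root of sl_2(ℂ) and (H_α, E_α, E_{−α}) is the standard sl_2-triple, so that l = {0} and m^ℂ = ℂE_α + ℂE_{−α}. Then, up to complex conjugation of m^{10} (equivalently, up to the sign of the complex structure J), the holomorphic subspaces of m^ℂ are exactly the complex lines m^{10} = ℂ(E_α + t E_{−α}) with t ∈ ℂ, |t| < 1. Thus the invariant CR structures on SU_2 subordinate to D_Z, determined up to sign, are in bijection with the points of the open unit disc D = {t ∈ ℂ : |t| < 1}, and the CR structure (D_Z, J_t) is standard if and only if t = 0. -/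

import Mathlib

noncomputable section

open scoped TensorProduct

namespace CRPaper

variable {g : Type} [LieRing g] [LieAlgebra ℝ g] [FiniteDimensional ℝ g]

/-- `B` is an `Ad`-invariant (Euclidean) inner product on the real Lie algebra `g`;
its existence encodes that `g` is a *compact* Lie algebra. -/
structure IsInvariantInner (B : g →ₗ[ℝ] g →ₗ[ℝ] ℝ) : Prop where
  symm : ∀ x y : g, B x y = B y x
  posdef : ∀ x : g, x ≠ 0 → 0 < B x x
  invariant : ∀ x y z : g, B ⁅x, y⁆ z + B y ⁅x, z⁆ = 0

/-- The canonical inclusion of `g` in its complexification `g^ℂ = ℂ ⊗[ℝ] g`. -/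
def inclL : g →ₗ[ℝ] ℂ ⊗[ℝ] g := TensorProduct.mk ℝ ℂ g 1

/-- Conjugation of the complexification `g^ℂ` with respect to the real form `g`,
as an `ℝ`-linear map. -/
def conjA : ℂ ⊗[ℝ] g →ₗ[ℝ] ℂ ⊗[ℝ] g :=
  TensorProduct.map Complex.conjAe.toLinearMap LinearMap.id

/-- `Z` is a *contact element* for the subalgebra `l ⊆ g`:  it is a nonzero vector,
orthogonal to `l` w.r.t. `B`, whose centralizer is exactly `l ⊕ ℝ Z`. -/
structure IsContactElement (B : g →ₗ[ℝ] g →ₗ[ℝ] ℝ) (l : LieSubalgebra ℝ g) (Z : g) :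
    Prop where
  ne_zero : Z ≠ 0
  orth : ∀ y ∈ l, B Z y = 0
  cent : ∀ x : g, ⁅x, Z⁆ = 0 ↔ ∃ y ∈ l, ∃ c : ℝ, x = y + c • Z

/-- The subspace `k = l + ℝ Z` (the centralizer of the contact element). -/
def kSub (l : LieSubalgebra ℝ g) (Z : g) : Submodule ℝ g :=
  l.toSubmodule ⊔ (Submodule.span ℝ {Z})

/-- The subspace `m`: the `B`-orthogonal complement of `k = l + ℝ Z` in `g`. -/
def mSub (B : g →ₗ[ℝ] g →ₗ[ℝ] ℝ) (l : LieSubalgebra ℝ g) (Z : g) : Submodule ℝ g where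
  carrier := {x : g | ∀ y ∈ kSub l Z, B x y = 0}
  add_mem' := by intro a b ha hb y hy; rw [map_add, LinearMap.add_apply, ha y hy, hb y hy,
    add_zero]
  zero_mem' := by intro y hy; rw [map_zero, LinearMap.zero_apply]
  smul_mem' := by intro c a ha y hy; rw [map_smul, LinearMap.smul_apply, ha y hy, smul_zero]

/-- Complexification of a real subspace of `g`, as a subspace of `g^ℂ`. -/
def cx (p : Submodule ℝ g) : Submodule ℂ (ℂ ⊗[ℝ] g) := p.baseChange ℂ

/-- The conjugate of a complex subspace of `g^ℂ` (w.r.t. the real form `g`). -/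
def conjSpan (W : Submodule ℂ (ℂ ⊗[ℝ] g)) : Submodule ℂ (ℂ ⊗[ℝ] g) :=
  Submodule.span ℂ (conjA '' (W : Set (ℂ ⊗[ℝ] g)))

/-- A *holomorphic subspace* `m¹⁰ ⊆ m^ℂ`: it intersects its conjugate `m⁰¹` trivially,
together with `m⁰¹` it spans `m^ℂ`, and `l^ℂ + m¹⁰` is a subalgebra of `g^ℂ`
(the integrability condition).  Holomorphic subspaces correspond exactly to the
invariant CR structures `(D_Z, J)` on `G/L` subordinate to the invariant contact
structure `D_Z`. -/
structure IsHolo (B : g →ₗ[ℝ] g →ₗ[ℝ] ℝ) (l : LieSubalgebra ℝ g) (Z : g)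
    (m10 : Submodule ℂ (ℂ ⊗[ℝ] g)) : Prop where
  le : m10 ≤ cx (mSub B l Z)
  inf_conj : m10 ⊓ conjSpan m10 = ⊥
  sup_conj : cx (mSub B l Z) ≤ m10 ⊔ conjSpan m10
  subalg : ∀ x ∈ cx l.toSubmodule ⊔ m10, ∀ y ∈ cx l.toSubmodule ⊔ m10,
      ⁅x, y⁆ ∈ cx l.toSubmodule ⊔ m10

/-- The invariant CR structure determined by the holomorphic subspace `m¹⁰` is *standard*:
`m¹⁰` is invariant under the adjoint action of `k = l + ℝ Z`. -/
def IsStandard (l : LieSubalgebra ℝ g) (Z : g) (m10 : Submodule ℂ (ℂ ⊗[ℝ] g)) : Prop :=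
  ∀ x ∈ kSub l Z, ∀ v ∈ m10, ⁅inclL x, v⁆ ∈ m10

/-- A Cartan subalgebra of the compact Lie algebra `g`: a maximal abelian subalgebra. -/
structure IsCartan (h : LieSubalgebra ℝ g) : Prop where
  abelian : ∀ x ∈ h, ∀ y ∈ h, ⁅x, y⁆ = 0
  maximal : ∀ x : g, (∀ y ∈ h, ⁅x, y⁆ = 0) → x ∈ h

/-- The root space of `(g^ℂ, h^ℂ)` attached to the vector `t ∈ h ⊆ g`;  here a root `α` is
identified with the vector `t = t_α ∈ h` such that `α(x) = i·B(t, x)` for all `x ∈ h`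
(the identification being made via the invariant inner product `B`). -/
def rootSpace (B : g →ₗ[ℝ] g →ₗ[ℝ] ℝ) (h : LieSubalgebra ℝ g) (t : g) :
    Submodule ℂ (ℂ ⊗[ℝ] g) where
  carrier := {X | ∀ x ∈ h, ⁅inclL x, X⁆ = (Complex.I * (B t x : ℝ)) • X}
  add_mem' := by
    intro a b ha hb x hx
    have h1 : ⁅inclL x, a + b⁆ = ⁅inclL x, a⁆ + ⁅inclL x, b⁆ := lie_add (inclL x) a b
    rw [h1, ha x hx, hb x hx, smul_add]
  zero_mem' := by
    intro x hx
    have h1 : ⁅inclL x, (0 : ℂ ⊗[ℝ] g)⁆ = 0 := lie_zero (inclL x)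
    rw [h1, smul_zero]
  smul_mem' := by
    intro c a ha x hx
    have h1 : ⁅inclL x, c • a⁆ = c • ⁅inclL x, a⁆ := lie_smul c (inclL x) a
    rw [h1, ha x hx, smul_comm]

/-- `t ∈ h` represents a root of `(g^ℂ, h^ℂ)` via `α = i·B(t, ·)`. -/
def IsRootVec (B : g →ₗ[ℝ] g →ₗ[ℝ] ℝ) (h : LieSubalgebra ℝ g) (t : g) : Prop :=
  t ∈ h ∧ t ≠ 0 ∧ rootSpace B h t ≠ ⊥

/-- The set of (vectors in `h` representing) roots of `(g^ℂ, h^ℂ)`. -/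
def rootSet (B : g →ₗ[ℝ] g →ₗ[ℝ] ℝ) (h : LieSubalgebra ℝ g) : Set g :=
  {t | IsRootVec B h t}

/-- Since the contact form `ϑ = -i·B(Z,·)` corresponds to (a multiple of) the vector `Z`
under the identification of roots with vectors, two roots `a`, `b` are *ϑ-congruent*
iff they differ by a real multiple of `Z`. -/
def ThetaCongruent (Z : g) (a b : g) : Prop := ∃ lam : ℝ, b = a + lam • Z

/-- The contact form `ϑ = -i·B(Z,·)` is proportional to the root (vector) `t`. -/
def PropToRoot (Z t : g) : Prop := ∃ c : ℝ, c ≠ 0 ∧ Z = c • t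

/-- A subset `P` of the set of roots `R` is a positive system. -/
structure IsPositiveSystem (R P : Set g) : Prop where
  subset : P ⊆ R
  total : ∀ t ∈ R, t ∈ P ∨ -t ∈ P
  not_neg : ∀ t ∈ P, -t ∉ P
  closed : ∀ s ∈ P, ∀ t ∈ P, s + t ∈ R → s + t ∈ P

/-- `W` is a submodule for (i.e. invariant under the bracket action of) the
subspace `a ⊆ g^ℂ`. -/
def IsInvSubmod (a W : Submodule ℂ (ℂ ⊗[ℝ] g)) : Prop :=
  ∀ x ∈ a, ∀ w ∈ W, ⁅x, w⁆ ∈ W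

/-- `W` is an irreducible `a`-submodule of `g^ℂ`. -/
def IsIrredOf (a W : Submodule ℂ (ℂ ⊗[ℝ] g)) : Prop :=
  W ≠ ⊥ ∧ IsInvSubmod a W ∧ ∀ W' ≤ W, IsInvSubmod a W' → W' = ⊥ ∨ W' = W

/-- The smallest `a`-invariant subspace of `g^ℂ` containing the vector `v`. -/
def genSubmod (a : Submodule ℂ (ℂ ⊗[ℝ] g)) (v : ℂ ⊗[ℝ] g) : Submodule ℂ (ℂ ⊗[ℝ] g) :=
  sInf {W | v ∈ W ∧ IsInvSubmod a W}

/-- `W` and `W'` are isomorphic as modules for the subspace `a ⊆ g^ℂ`. -/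
def ModIso (a W W' : Submodule ℂ (ℂ ⊗[ℝ] g)) : Prop :=
  ∃ f : (ℂ ⊗[ℝ] g) →ₗ[ℂ] (ℂ ⊗[ℝ] g),
    (∀ w ∈ W, f w ∈ W') ∧ (∀ w ∈ W, f w = 0 → w = 0) ∧
    (∀ w' ∈ W', ∃ w ∈ W, f w = w') ∧
    (∀ x ∈ a, ∀ w ∈ W, f ⁅x, w⁆ = ⁅x, f w⁆)

/-- `W ⊆ g^ℂ` has highest weight (represented by the vector) `t ∈ h`, with respect to the
positive system `P`: it contains a nonzero weight vector of weight `t` annihilated by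
all the root vectors of positive roots. -/
def HasHighestWeight (B : g →ₗ[ℝ] g →ₗ[ℝ] ℝ) (h : LieSubalgebra ℝ g) (P : Set g)
    (W : Submodule ℂ (ℂ ⊗[ℝ] g)) (t : g) : Prop :=
  ∃ v ∈ W ⊓ rootSpace B h t, v ≠ 0 ∧ ∀ s ∈ P, ∀ X ∈ rootSpace B h s, ⁅X, v⁆ = 0

/-- The real points of a complex subspace `W ⊆ g^ℂ`: `{x ∈ g | x ∈ W}`. -/
def realPts (W : Submodule ℂ (ℂ ⊗[ℝ] g)) : Submodule ℝ g :=
  (W.restrictScalars ℝ).comap inclL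

/-- The normalizer in `g` of the subspace `l^ℂ + m⁰¹ ⊆ g^ℂ`  (the Lie algebra of the
stabilizer of the image point of the anticanonical map `φ(gL) = Ad_g(l^ℂ + m⁰¹)`). -/
def normSet (l : LieSubalgebra ℝ g) (m10 : Submodule ℂ (ℂ ⊗[ℝ] g)) : Set g :=
  {x : g | ∀ v ∈ cx l.toSubmodule ⊔ conjSpan m10,
    ⁅inclL x, v⁆ ∈ cx l.toSubmodule ⊔ conjSpan m10}

/-- The homogeneous CR manifold determined by `(l, Z, m¹⁰)` admits a non-trivial CRF
fibration (i.e. it is *non-primitive*), encoded via Lemma 4.8 of the paper:  there is a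
proper parabolic subalgebra `p ⊆ g^ℂ` (parabolicity being encoded by `p + σ(p) = g^ℂ`,
its reductive part being `r = p ⊓ σ(p) = ((p ∩ g)^ℂ)`) such that `l^ℂ + m¹⁰ ⊆ p` and
`l^ℂ ⊊ r`. -/
def HasCRF (l : LieSubalgebra ℝ g) (m10 : Submodule ℂ (ℂ ⊗[ℝ] g)) : Prop :=
  ∃ p : Submodule ℂ (ℂ ⊗[ℝ] g),
    (∀ x ∈ p, ∀ y ∈ p, ⁅x, y⁆ ∈ p) ∧
    p ≠ ⊤ ∧
    (∀ v : ℂ ⊗[ℝ] g, ∃ a ∈ p, ∃ b ∈ p, v = a + conjA b) ∧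
    cx l.toSubmodule ⊔ m10 ≤ p ∧
    (∃ v ∈ p ⊓ conjSpan p, v ∉ cx l.toSubmodule)

/-- The CR structure is *circular*: it admits a CRF fibration with one-dimensional
(i.e. `S¹`) fiber `Q/L`, `Lie(Q) = r ∩ g`. -/
def IsCircular (l : LieSubalgebra ℝ g) (m10 : Submodule ℂ (ℂ ⊗[ℝ] g)) : Prop :=
  ∃ p : Submodule ℂ (ℂ ⊗[ℝ] g),
    (∀ x ∈ p, ∀ y ∈ p, ⁅x, y⁆ ∈ p) ∧
    p ≠ ⊤ ∧
    (∀ v : ℂ ⊗[ℝ] g, ∃ a ∈ p, ∃ b ∈ p, v = a + conjA b) ∧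
    cx l.toSubmodule ⊔ m10 ≤ p ∧
    Module.finrank ℝ (realPts (p ⊓ conjSpan p)) = Module.finrank ℝ l.toSubmodule + 1

end CRPaper

namespace CRPaper

set_option linter.unusedSectionVars false
set_option maxHeartbeats 1000000

section Aux

variable {g : Type} [LieRing g] [LieAlgebra ℝ g] [FiniteDimensional ℝ g]

lemma conjA_tmul (c : ℂ) (x : g) : conjA (c ⊗ₜ[ℝ] x) = (starRingEnd ℂ c) ⊗ₜ[ℝ] x := rfl

lemma conjA_conjA (v : ℂ ⊗[ℝ] g) : conjA (conjA v) = v := by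
  induction v using TensorProduct.induction_on with
  | zero => simp
  | tmul c x => simp [conjA_tmul]
  | add a b ha hb => simp [map_add, ha, hb]

lemma conjA_smul (c : ℂ) (v : ℂ ⊗[ℝ] g) :
    conjA (c • v) = (starRingEnd ℂ c) • conjA v := by
  induction v using TensorProduct.induction_on with
  | zero => simp
  | tmul d x =>
      rw [TensorProduct.smul_tmul', conjA_tmul, conjA_tmul, TensorProduct.smul_tmul',
        smul_eq_mul, smul_eq_mul, map_mul]
  | add a b ha hb => rw [smul_add, map_add, ha, hb, map_add, smul_add]

lemma bracket_inclL (z : g) (c : ℂ) (x : g) :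
    ⁅inclL z, c ⊗ₜ[ℝ] x⁆ = c ⊗ₜ[ℝ] ⁅z, x⁆ := by
  show ⁅(1 : ℂ) ⊗ₜ[ℝ] z, c ⊗ₜ[ℝ] x⁆ = c ⊗ₜ[ℝ] ⁅z, x⁆
  rw [LieAlgebra.ExtendScalars.bracket_tmul, one_mul]

lemma conjSpan_singleton (v : ℂ ⊗[ℝ] g) :
    conjSpan (Submodule.span ℂ {v}) = Submodule.span ℂ {conjA v} := by
  apply le_antisymm
  · rw [conjSpan, Submodule.span_le]
    rintro - ⟨x, hx, rfl⟩
    obtain ⟨c, rfl⟩ := Submodule.mem_span_singleton.mp hx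
    rw [conjA_smul]
    exact Submodule.smul_mem _ _ (Submodule.mem_span_singleton_self _)
  · rw [Submodule.span_le, Set.singleton_subset_iff]
    exact Submodule.subset_span ⟨v, Submodule.mem_span_singleton_self v, rfl⟩

lemma span_singleton_neg {K V : Type*} [Field K] [AddCommGroup V] [Module K V] (w : V) :
    Submodule.span K {-w} = Submodule.span K {w} := by
  rw [← neg_one_smul K w, Submodule.span_singleton_smul_eq isUnit_one.neg w]

lemma botSubmodule : ((⊥ : LieSubalgebra ℝ g) : Submodule ℝ g) = ⊥ := by
  ext x
  simp [LieSubalgebra.mem_bot]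

lemma kSub_bot (Z : g) : kSub (⊥ : LieSubalgebra ℝ g) Z = Submodule.span ℝ {Z} := by
  rw [kSub, botSubmodule, bot_sup_eq]

lemma mem_mSub {B : g →ₗ[ℝ] g →ₗ[ℝ] ℝ} {l : LieSubalgebra ℝ g} {Z : g} {x : g} :
    x ∈ mSub B l Z ↔ ∀ y ∈ kSub l Z, B x y = 0 := Iff.rfl

lemma cx_bot : cx ((⊥ : LieSubalgebra ℝ g) : Submodule ℝ g) = ⊥ := by
  rw [botSubmodule]
  show (⊥ : Submodule ℝ g).baseChange ℂ = ⊥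
  exact Submodule.baseChange_bot ℂ

lemma lzero (X : ℂ ⊗[ℝ] g) : ⁅X, (0 : ℂ ⊗[ℝ] g)⁆ = 0 := by exact lie_zero X

lemma ladd (X Y W : ℂ ⊗[ℝ] g) : ⁅X, Y + W⁆ = ⁅X, Y⁆ + ⁅X, W⁆ := by exact lie_add X Y W

lemma lsmul (c : ℂ) (X Y : ℂ ⊗[ℝ] g) : ⁅X, c • Y⁆ = c • ⁅X, Y⁆ := by exact lie_smul c X Y

lemma slie (c : ℂ) (X Y : ℂ ⊗[ℝ] g) : ⁅c • X, Y⁆ = c • ⁅X, Y⁆ := by exact smul_lie c X Y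

lemma lself (X : ℂ ⊗[ℝ] g) : ⁅X, X⁆ = 0 := by exact lie_self X

lemma conjSpan_bot : conjSpan (⊥ : Submodule ℂ (ℂ ⊗[ℝ] g)) = ⊥ := by
  rw [show (⊥ : Submodule ℂ (ℂ ⊗[ℝ] g)) = Submodule.span ℂ {0} from
    (Submodule.span_zero_singleton ℂ).symm, conjSpan_singleton, map_zero,
    Submodule.span_zero_singleton]

end Aux

/-- (cf. Theorem 5.1 b)).  Let `M = SU₂` (so `g = su₂`, the 3-dimensional
compact Lie algebra) with contact element `Z = iH_α`, where `(H_α, E_α, E_{−α})` is the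
standard `sl₂`-triple of `g^ℂ = sl₂(ℂ)`, so that `l = 0` and `m^ℂ = ℂE_α + ℂE_{−α}`.
Then, up to complex conjugation of `m¹⁰` (the sign of `J`), the holomorphic subspaces of
`m^ℂ` are exactly the lines `ℂ(E_α + t E_{−α})`, `|t| < 1`;  distinct parameters give
distinct CR structures;  and the CR structure `(D_Z, J_t)` is standard iff `t = 0`. -/
theorem stmt_9 {g : Type} [LieRing g] [LieAlgebra ℝ g] [FiniteDimensional ℝ g]
    (B : g →ₗ[ℝ] g →ₗ[ℝ] ℝ) (hB : IsInvariantInner B)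
    (hdim : Module.finrank ℝ g = 3)
    -- the standard `sl₂`-triple `(H, E, F) = (H_α, E_α, E_{−α})` of `g^ℂ = sl₂(ℂ)`
    (E F H : ℂ ⊗[ℝ] g)
    (hEF : ⁅E, F⁆ = H) (hHE : ⁅H, E⁆ = (2 : ℂ) • E) (hHF : ⁅H, F⁆ = (-2 : ℂ) • F)
    (hspan : Submodule.span ℂ {E, F, H} = (⊤ : Submodule ℂ (ℂ ⊗[ℝ] g)))
    -- compatibility with the compact real form `g`
    (hcE : conjA E = -F) (hcH : conjA H = -H)
    -- the contact element `Z = iH_α ∈ g = su₂`, with `l = 0`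
    (Z : g) (hZ : inclL Z = Complex.I • H)
    (hcontact : IsContactElement B (⊥ : LieSubalgebra ℝ g) Z) :
    -- classification of the invariant CR structures subordinate to `D_Z`
    (∀ m10 : Submodule ℂ (ℂ ⊗[ℝ] g),
      IsHolo B (⊥ : LieSubalgebra ℝ g) Z m10 ↔
        ∃ t : ℂ, ‖t‖ < 1 ∧
          (m10 = Submodule.span ℂ {E + t • F} ∨
           m10 = Submodule.span ℂ {(starRingEnd ℂ t) • E + F})) ∧
    -- the parameterization by the unit disc is injective
    (∀ t s : ℂ, ‖t‖ < 1 → ‖s‖ < 1 →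
      Submodule.span ℂ {E + t • F} = Submodule.span ℂ {E + s • F} → t = s) ∧
    -- `(D_Z, J_t)` is standard iff `t = 0`
    (∀ t : ℂ, ‖t‖ < 1 →
      (IsStandard (⊥ : LieSubalgebra ℝ g) Z (Submodule.span ℂ {E + t • F}) ↔ t = 0)) := by
  classical
  haveI : FiniteDimensional ℂ (ℂ ⊗[ℝ] g) := Module.Finite.base_change ℝ ℂ g
  -- linear independence of E, F, H
  have hfr3 : Module.finrank ℂ (ℂ ⊗[ℝ] g) = 3 := by
    rw [Module.finrank_baseChange, hdim]
  have hrange : Set.range ![E, F, H] = {E, F, H} := by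
    ext x
    constructor
    · rintro ⟨i, rfl⟩
      fin_cases i <;> simp
    · intro hx
      simp only [Set.mem_insert_iff, Set.mem_singleton_iff] at hx
      rcases hx with rfl | rfl | rfl
      exacts [⟨0, rfl⟩, ⟨1, rfl⟩, ⟨2, rfl⟩]
  have htop : ⊤ ≤ Submodule.span ℂ (Set.range ![E, F, H]) := by rw [hrange, hspan]
  have hcard : Fintype.card (Fin 3) = Module.finrank ℂ (ℂ ⊗[ℝ] g) := by
    rw [Fintype.card_fin, hfr3]
  have hli : LinearIndependent ℂ ![E, F, H] := by
    have h := (basisOfTopLeSpanOfCardEqFinrank ![E, F, H] htop hcard).linearIndependent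
    rwa [coe_basisOfTopLeSpanOfCardEqFinrank] at h
  have hEFH : ∀ a b c : ℂ, a • E + b • F + c • H = 0 → a = 0 ∧ b = 0 ∧ c = 0 := by
    intro a b c h
    have h2 := Fintype.linearIndependent_iff.mp hli ![a, b, c] (by
      rw [Fin.sum_univ_three]
      simpa using h)
    exact ⟨h2 0, h2 1, h2 2⟩
  have hEF2 : ∀ a b : ℂ, a • E + b • F = 0 → a = 0 ∧ b = 0 := by
    intro a b h
    have h3 := hEFH a b 0 (by rw [zero_smul, add_zero]; exact h)
    exact ⟨h3.1, h3.2.1⟩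
  have hE0 : E ≠ 0 := by
    intro h
    have := (hEF2 1 0 (by rw [h, smul_zero, zero_smul, add_zero])).1
    exact one_ne_zero this
  have hF0 : F ≠ 0 := by
    intro h
    have := (hEF2 0 1 (by rw [h, smul_zero, zero_smul, zero_add])).2
    exact one_ne_zero this
  have hcF : conjA F = -E := by
    have h2 := congrArg conjA hcE
    rw [conjA_conjA, map_neg] at h2
    rw [h2, neg_neg]
  -- E and F belong to m^C
  have hZm : ∀ x : g, ⁅Z, x⁆ ∈ mSub B (⊥ : LieSubalgebra ℝ g) Z := by
    intro x
    rw [mem_mSub]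
    intro y hy
    rw [kSub_bot] at hy
    obtain ⟨c, rfl⟩ := Submodule.mem_span_singleton.mp hy
    have h1 := hB.invariant Z x Z
    rw [lie_self, map_zero, add_zero] at h1
    rw [map_smul, h1, smul_zero]
  have hbrZ : ∀ X : ℂ ⊗[ℝ] g, ⁅inclL Z, X⁆ ∈ cx (mSub B (⊥ : LieSubalgebra ℝ g) Z) := by
    intro X
    induction X using TensorProduct.induction_on with
    | zero =>
        rw [lzero]; exact Submodule.zero_mem _
    | tmul c x =>
        rw [bracket_inclL]
        exact Submodule.tmul_mem_baseChange_of_mem c (hZm x)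
    | add a b ha hb =>
        rw [ladd]; exact Submodule.add_mem _ ha hb
  have hEcm : E ∈ cx (mSub B (⊥ : LieSubalgebra ℝ g) Z) := by
    have hIne : (Complex.I * 2 : ℂ) ≠ 0 := by simp [Complex.I_ne_zero]
    have h1 : ⁅inclL Z, E⁆ = (Complex.I * 2) • E := by
      rw [hZ, slie, hHE, smul_smul]
    have h2 : E = (Complex.I * 2)⁻¹ • ⁅inclL Z, E⁆ := by
      rw [h1, smul_smul, inv_mul_cancel₀ hIne, one_smul]
    rw [h2]; exact Submodule.smul_mem _ _ (hbrZ E)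
  have hFcm : F ∈ cx (mSub B (⊥ : LieSubalgebra ℝ g) Z) := by
    have hIne2 : (Complex.I * (-2) : ℂ) ≠ 0 := by simp [Complex.I_ne_zero]
    have h1 : ⁅inclL Z, F⁆ = (Complex.I * (-2)) • F := by
      rw [hZ, slie, hHF, smul_smul]
    have h2 : F = (Complex.I * (-2))⁻¹ • ⁅inclL Z, F⁆ := by
      rw [h1, smul_smul, inv_mul_cancel₀ hIne2, one_smul]
    rw [h2]; exact Submodule.smul_mem _ _ (hbrZ F)
  -- the dimension of m is 2
  have hBZZ : B Z Z ≠ 0 := ne_of_gt (hB.posdef Z hcontact.ne_zero)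
  have hker : mSub B (⊥ : LieSubalgebra ℝ g) Z = LinearMap.ker (B.flip Z) := by
    ext x
    rw [mem_mSub, LinearMap.mem_ker, LinearMap.flip_apply]
    constructor
    · intro hx
      exact hx Z (by rw [kSub_bot]; exact Submodule.mem_span_singleton_self Z)
    · intro hx y hy
      rw [kSub_bot] at hy
      obtain ⟨c, rfl⟩ := Submodule.mem_span_singleton.mp hy
      rw [map_smul, hx, smul_zero]
  have hfm : Module.finrank ℝ (mSub B (⊥ : LieSubalgebra ℝ g) Z) = 2 := by
    have hrk := LinearMap.finrank_range_add_finrank_ker (B.flip Z)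
    have hne : LinearMap.range (B.flip Z) ≠ ⊥ := by
      intro h
      have h2 : B.flip Z Z ∈ LinearMap.range (B.flip Z) := LinearMap.mem_range_self _ Z
      rw [h, Submodule.mem_bot, LinearMap.flip_apply] at h2
      exact hBZZ h2
    have hle1 : Module.finrank ℝ (LinearMap.range (B.flip Z)) ≤ 1 := by
      have h4 := Submodule.finrank_le (LinearMap.range (B.flip Z))
      rwa [Module.finrank_self] at h4
    have hge1 : Module.finrank ℝ (LinearMap.range (B.flip Z)) ≠ 0 :=
      fun h => hne (Submodule.finrank_eq_zero.mp h)
    rw [hdim] at hrk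
    rw [hker]
    omega
  -- m^C = span {E, F}
  have hcxle : Module.finrank ℂ (cx (mSub B (⊥ : LieSubalgebra ℝ g) Z)) ≤ 2 := by
    set bm := Module.finBasis ℝ (mSub B (⊥ : LieSubalgebra ℝ g) Z) with hbm
    have hmspan : Submodule.span ℝ
        (Set.range ((mSub B (⊥ : LieSubalgebra ℝ g) Z).subtype ∘ bm)) =
        mSub B (⊥ : LieSubalgebra ℝ g) Z := by
      apply le_antisymm
      · rw [Submodule.span_le]
        rintro - ⟨i, rfl⟩
        exact (bm i).2
      · intro x hx
        have h2 : (⟨x, hx⟩ : mSub B (⊥ : LieSubalgebra ℝ g) Z) ∈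
            Submodule.span ℝ (Set.range bm) := by
          rw [bm.span_eq]; trivial
        have h3 : x ∈ Submodule.map (mSub B (⊥ : LieSubalgebra ℝ g) Z).subtype
            (Submodule.span ℝ (Set.range bm)) := ⟨⟨x, hx⟩, h2, rfl⟩
        rwa [Submodule.map_span, ← Set.range_comp] at h3
    have h1 : cx (mSub B (⊥ : LieSubalgebra ℝ g) Z) = Submodule.span ℂ
        (Set.range (TensorProduct.mk ℝ ℂ g 1 ∘
          ((mSub B (⊥ : LieSubalgebra ℝ g) Z).subtype ∘ bm))) := by
      conv_lhs => rw [← hmspan]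
      rw [cx, Submodule.baseChange_span]
      simp [Set.range_comp]
    have hfr_eq : Module.finrank ℂ (cx (mSub B (⊥ : LieSubalgebra ℝ g) Z)) =
        Module.finrank ℂ (Submodule.span ℂ (Set.range (TensorProduct.mk ℝ ℂ g 1 ∘
          ((mSub B (⊥ : LieSubalgebra ℝ g) Z).subtype ∘ bm)))) :=
      congrArg (fun W : Submodule ℂ (ℂ ⊗[ℝ] g) => Module.finrank ℂ W) h1
    rw [hfr_eq]
    have h2 := finrank_range_le_card (R := ℂ)
      (TensorProduct.mk ℝ ℂ g 1 ∘ ((mSub B (⊥ : LieSubalgebra ℝ g) Z).subtype ∘ bm))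
    rw [Fintype.card_fin] at h2
    exact le_trans h2 (le_of_eq hfm)
  have hliEF : LinearIndependent ℂ ![E, F] := LinearIndependent.pair_iff.mpr hEF2
  have hrEF : Set.range ![E, F] = {E, F} := by
    ext x
    constructor
    · rintro ⟨i, rfl⟩
      fin_cases i <;> simp
    · intro hx
      simp only [Set.mem_insert_iff, Set.mem_singleton_iff] at hx
      rcases hx with rfl | rfl
      exacts [⟨0, rfl⟩, ⟨1, rfl⟩]
  have hEqspan : Submodule.span ℂ (Set.range ![E, F]) =
      Submodule.span ℂ ({E, F} : Set (ℂ ⊗[ℝ] g)) := by rw [hrEF]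
  have hfrEF : Module.finrank ℂ (Submodule.span ℂ ({E, F} : Set (ℂ ⊗[ℝ] g))) = 2 := by
    rw [← hEqspan, finrank_span_eq_card hliEF, Fintype.card_fin]
  have hEFle : Submodule.span ℂ ({E, F} : Set (ℂ ⊗[ℝ] g)) ≤
      cx (mSub B (⊥ : LieSubalgebra ℝ g) Z) := by
    rw [Submodule.span_le]
    rintro x hx
    simp only [Set.mem_insert_iff, Set.mem_singleton_iff] at hx
    rcases hx with rfl | rfl
    exacts [hEcm, hFcm]
  have hcxm : cx (mSub B (⊥ : LieSubalgebra ℝ g) Z) =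
      Submodule.span ℂ ({E, F} : Set (ℂ ⊗[ℝ] g)) :=
    (Submodule.eq_of_le_of_finrank_le hEFle (by rw [hfrEF]; exact hcxle)).symm
  -- some scalar arithmetic
  have hconj_mul : ∀ t : ℂ, ‖t‖ < 1 → 1 - t * (starRingEnd ℂ) t ≠ 0 := by
    intro t ht h
    have h2 : t * (starRingEnd ℂ) t = 1 := by linear_combination -h
    have h3 : (Complex.normSq t : ℂ) = 1 := by rw [← Complex.mul_conj]; exact h2
    have h4 : Complex.normSq t = 1 := by exact_mod_cast h3
    rw [Complex.normSq_eq_norm_sq] at h4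
    nlinarith [norm_nonneg t]
  have hconjAu : ∀ t : ℂ, conjA (E + t • F) = -((starRingEnd ℂ) t • E + F) := by
    intro t
    rw [map_add, conjA_smul, hcE, hcF, smul_neg]
    abel
  have hconjAw : ∀ t : ℂ, conjA ((starRingEnd ℂ) t • E + F) = -(E + t • F) := by
    intro t
    rw [map_add, conjA_smul, hcE, hcF, Complex.conj_conj, smul_neg]
    abel
  -- the two lines attached to t intersect trivially and span m^C
  have hINF : ∀ t : ℂ, ‖t‖ < 1 →
      Submodule.span ℂ {E + t • F} ⊓ Submodule.span ℂ {(starRingEnd ℂ) t • E + F}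
        = ⊥ := by
    intro t ht
    rw [eq_bot_iff]
    intro x hx
    obtain ⟨hx1, hx2⟩ := Submodule.mem_inf.mp hx
    obtain ⟨c, rfl⟩ := Submodule.mem_span_singleton.mp hx1
    obtain ⟨d, hd⟩ := Submodule.mem_span_singleton.mp hx2
    have he : (c - d * (starRingEnd ℂ) t) • E + (c * t - d) • F = 0 := by
      have h0 : c • (E + t • F) - d • ((starRingEnd ℂ) t • E + F) = 0 := by
        rw [hd, sub_self]
      calc (c - d * (starRingEnd ℂ) t) • E + (c * t - d) • F
          = c • (E + t • F) - d • ((starRingEnd ℂ) t • E + F) := by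
            rw [smul_add, smul_add, smul_smul, smul_smul, sub_smul, sub_smul]; abel
        _ = 0 := h0
    obtain ⟨h1, h2⟩ := hEF2 _ _ he
    have h4 : c * (1 - t * (starRingEnd ℂ) t) = 0 := by
      linear_combination h1 - (starRingEnd ℂ) t * h2
    have hc : c = 0 := (mul_eq_zero.mp h4).resolve_right (hconj_mul t ht)
    rw [Submodule.mem_bot, hc, zero_smul]
  have hSUP : ∀ t : ℂ, ‖t‖ < 1 →
      Submodule.span ℂ ({E, F} : Set (ℂ ⊗[ℝ] g)) ≤
        Submodule.span ℂ {E + t • F} ⊔ Submodule.span ℂ {(starRingEnd ℂ) t • E + F} := by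
    intro t ht
    have hu : E + t • F ∈ Submodule.span ℂ {E + t • F} ⊔
        Submodule.span ℂ {(starRingEnd ℂ) t • E + F} :=
      Submodule.mem_sup_left (Submodule.mem_span_singleton_self _)
    have hw : (starRingEnd ℂ) t • E + F ∈ Submodule.span ℂ {E + t • F} ⊔
        Submodule.span ℂ {(starRingEnd ℂ) t • E + F} :=
      Submodule.mem_sup_right (Submodule.mem_span_singleton_self _)
    have hE' : E ∈ Submodule.span ℂ {E + t • F} ⊔
        Submodule.span ℂ {(starRingEnd ℂ) t • E + F} := by
      have h1 : (E + t • F) - t • ((starRingEnd ℂ) t • E + F)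
          = (1 - t * (starRingEnd ℂ) t) • E := by
        rw [smul_add, smul_smul, sub_smul, one_smul]
        abel
      have h2 : E = (1 - t * (starRingEnd ℂ) t)⁻¹ •
          ((E + t • F) - t • ((starRingEnd ℂ) t • E + F)) := by
        rw [h1, smul_smul, inv_mul_cancel₀ (hconj_mul t ht), one_smul]
      have h3 := Submodule.smul_mem (Submodule.span ℂ {E + t • F} ⊔
        Submodule.span ℂ {(starRingEnd ℂ) t • E + F}) ((1 - t * (starRingEnd ℂ) t)⁻¹)
        (sub_mem hu (Submodule.smul_mem _ t hw))
      rwa [← h2] at h3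
    have hF' : F ∈ Submodule.span ℂ {E + t • F} ⊔
        Submodule.span ℂ {(starRingEnd ℂ) t • E + F} := by
      have h1 : ((starRingEnd ℂ) t • E + F) - (starRingEnd ℂ) t • (E + t • F)
          = (1 - (starRingEnd ℂ) t * t) • F := by
        rw [smul_add, smul_smul, sub_smul, one_smul]
        abel
      have hne : (1 - (starRingEnd ℂ) t * t : ℂ) ≠ 0 := by
        rw [mul_comm]; exact hconj_mul t ht
      have h2 : F = (1 - (starRingEnd ℂ) t * t)⁻¹ •
          (((starRingEnd ℂ) t • E + F) - (starRingEnd ℂ) t • (E + t • F)) := by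
        rw [h1, smul_smul, inv_mul_cancel₀ hne, one_smul]
      have h3 := Submodule.smul_mem (Submodule.span ℂ {E + t • F} ⊔
        Submodule.span ℂ {(starRingEnd ℂ) t • E + F}) ((1 - (starRingEnd ℂ) t * t)⁻¹)
        (sub_mem hw (Submodule.smul_mem _ ((starRingEnd ℂ) t) hu))
      rwa [← h2] at h3
    rw [Submodule.span_le]
    rintro x hx
    simp only [Set.mem_insert_iff, Set.mem_singleton_iff] at hx
    rcases hx with rfl | rfl
    exacts [hE', hF']
  refine ⟨?_, ?_, ?_⟩
  · -- classification
    intro m10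
    constructor
    · intro hHolo
      have hle2 : m10 ≤ Submodule.span ℂ ({E, F} : Set (ℂ ⊗[ℝ] g)) := by
        rw [← hcxm]; exact hHolo.le
      have hfin2 : Module.finrank ℂ m10 ≤ 2 := by
        have h4 := Submodule.finrank_mono hle2
        rwa [hfrEF] at h4
      obtain h0 | h1 | h2 : Module.finrank ℂ m10 = 0 ∨ Module.finrank ℂ m10 = 1 ∨
          Module.finrank ℂ m10 = 2 := by omega
      · exfalso
        have hbot : m10 = ⊥ := Submodule.finrank_eq_zero.mp h0
        have h5 := hHolo.sup_conj
        rw [hbot, conjSpan_bot, sup_bot_eq] at h5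
        exact hE0 ((Submodule.mem_bot ℂ).mp (h5 hEcm))
      · -- the main case : m10 is a line
        have hne : m10 ≠ ⊥ := by
          intro h
          rw [h, finrank_bot] at h1
          exact one_ne_zero h1.symm
        obtain ⟨v, hvm, hv0⟩ := (Submodule.ne_bot_iff m10).mp hne
        have hm10v : m10 = Submodule.span ℂ {v} := by
          refine (Submodule.eq_of_le_of_finrank_le ?_ ?_).symm
          · rw [Submodule.span_le, Set.singleton_subset_iff]; exact hvm
          · rw [finrank_span_singleton hv0, h1]
        obtain ⟨a, b, hab⟩ := Submodule.mem_span_pair.mp (hle2 hvm)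
        have habne : ¬(a = 0 ∧ b = 0) := by
          rintro ⟨rfl, rfl⟩
          rw [zero_smul, zero_smul, add_zero] at hab
          exact hv0 hab.symm
        by_cases habs : ‖a‖ = ‖b‖
        · exfalso
          have ha0 : a ≠ 0 := by
            intro ha
            apply habne
            refine ⟨ha, norm_eq_zero.mp ?_⟩
            rw [← habs, ha, norm_zero]
          have hbb : b * (starRingEnd ℂ) b = a * (starRingEnd ℂ) a := by
            rw [Complex.mul_conj, Complex.mul_conj]
            norm_cast
            rw [Complex.normSq_eq_norm_sq, Complex.normSq_eq_norm_sq, habs]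
          have hw : (starRingEnd ℂ) b • E + (starRingEnd ℂ) a • F
              = ((starRingEnd ℂ) b / a) • v := by
            rw [← hab, smul_add, smul_smul, smul_smul]
            have e1 : (starRingEnd ℂ) b = (starRingEnd ℂ) b / a * a := by
              field_simp
            have e2 : (starRingEnd ℂ) a = (starRingEnd ℂ) b / a * b := by
              rw [div_mul_eq_mul_div, eq_div_iff ha0]
              linear_combination -hbb
            rw [← e1, ← e2]
          have hcsle : conjSpan m10 ≤ m10 := by
            rw [hm10v, conjSpan_singleton]
            have hcv : conjA v = -((starRingEnd ℂ) b • E + (starRingEnd ℂ) a • F) := by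
              rw [← hab, map_add, conjA_smul, conjA_smul, hcE, hcF, smul_neg, smul_neg]
              abel
            rw [hcv, span_singleton_neg, hw, Submodule.span_le, Set.singleton_subset_iff]
            exact Submodule.smul_mem _ _ (Submodule.mem_span_singleton_self v)
          have hsup2 : Submodule.span ℂ ({E, F} : Set (ℂ ⊗[ℝ] g)) ≤ m10 :=
            le_trans (le_trans (le_of_eq hcxm.symm) hHolo.sup_conj)
              (sup_le le_rfl hcsle)
          have hEv : E ∈ Submodule.span ℂ {v} := by
            rw [← hm10v]
            exact hsup2 (Submodule.subset_span (by simp))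
          have hFv : F ∈ Submodule.span ℂ {v} := by
            rw [← hm10v]
            exact hsup2 (Submodule.subset_span (by simp))
          obtain ⟨c, hc⟩ := Submodule.mem_span_singleton.mp hEv
          obtain ⟨d, hd⟩ := Submodule.mem_span_singleton.mp hFv
          have hc0 : c ≠ 0 := by
            rintro rfl
            rw [zero_smul] at hc
            exact hE0 hc.symm
          have hdc : d • E + (-c) • F = 0 := by
            rw [← hc, ← hd, smul_smul, neg_smul, smul_smul, mul_comm d c]
            abel
          exact hc0 (neg_eq_zero.mp (hEF2 d (-c) hdc).2)
        · rcases lt_or_gt_of_ne habs with hlt | hlt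
          · -- |a| < |b|
            have hb0 : b ≠ 0 := by
              intro h
              rw [h, norm_zero] at hlt
              exact absurd hlt (not_lt.mpr (norm_nonneg a))
            refine ⟨(starRingEnd ℂ) (a / b), ?_, Or.inr ?_⟩
            · rw [RCLike.norm_conj, norm_div]
              exact (div_lt_one (lt_of_le_of_lt (norm_nonneg a) hlt)).mpr hlt
            · rw [hm10v, Complex.conj_conj]
              have hfrac : b * (a / b) = a := by field_simp
              have hv2 : v = b • ((a / b) • E + F) := by
                rw [smul_add, smul_smul, hfrac, ← hab]
              rw [hv2, Submodule.span_singleton_smul_eq (isUnit_iff_ne_zero.mpr hb0)]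
          · -- |b| < |a|
            have ha0 : a ≠ 0 := by
              intro h
              rw [h, norm_zero] at hlt
              exact absurd hlt (not_lt.mpr (norm_nonneg b))
            refine ⟨b / a, ?_, Or.inl ?_⟩
            · rw [norm_div]
              exact (div_lt_one (lt_of_le_of_lt (norm_nonneg b) hlt)).mpr hlt
            · rw [hm10v]
              have hfrac : a * (b / a) = b := by field_simp
              have hv2 : v = a • (E + (b / a) • F) := by
                rw [smul_add, smul_smul, hfrac, ← hab]
              rw [hv2, Submodule.span_singleton_smul_eq (isUnit_iff_ne_zero.mpr ha0)]
      · -- dimension 2 is impossible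
        exfalso
        have hEq : m10 = Submodule.span ℂ ({E, F} : Set (ℂ ⊗[ℝ] g)) :=
          Submodule.eq_of_le_of_finrank_le hle2 (by rw [hfrEF, h2])
        have hFm : -F ∈ m10 ⊓ conjSpan m10 := by
          refine Submodule.mem_inf.mpr ⟨?_, ?_⟩
          · rw [hEq]
            exact neg_mem (Submodule.subset_span (by simp))
          · refine Submodule.subset_span ⟨E, ?_, hcE⟩
            rw [hEq]
            exact Submodule.subset_span (by simp)
        rw [hHolo.inf_conj] at hFm
        exact hF0 (neg_eq_zero.mp ((Submodule.mem_bot ℂ).mp hFm))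
    · rintro ⟨t, ht, hcase | hcase⟩ <;> subst hcase
      · constructor
        · rw [Submodule.span_le, Set.singleton_subset_iff]
          exact Submodule.add_mem _ hEcm (Submodule.smul_mem _ _ hFcm)
        · rw [conjSpan_singleton, hconjAu t, span_singleton_neg]
          exact hINF t ht
        · rw [hcxm, conjSpan_singleton, hconjAu t, span_singleton_neg]
          exact hSUP t ht
        · intro x hx y hy
          rw [cx_bot, bot_sup_eq] at hx hy ⊢
          obtain ⟨c, rfl⟩ := Submodule.mem_span_singleton.mp hx
          obtain ⟨d, rfl⟩ := Submodule.mem_span_singleton.mp hy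
          rw [lsmul, slie, lself, smul_zero, smul_zero]
          exact Submodule.zero_mem _
      · constructor
        · rw [Submodule.span_le, Set.singleton_subset_iff]
          exact Submodule.add_mem _ (Submodule.smul_mem _ _ hEcm) hFcm
        · rw [conjSpan_singleton, hconjAw t, span_singleton_neg, inf_comm]
          exact hINF t ht
        · rw [hcxm, conjSpan_singleton, hconjAw t, span_singleton_neg, sup_comm]
          exact hSUP t ht
        · intro x hx y hy
          rw [cx_bot, bot_sup_eq] at hx hy ⊢
          obtain ⟨c, rfl⟩ := Submodule.mem_span_singleton.mp hx
          obtain ⟨d, rfl⟩ := Submodule.mem_span_singleton.mp hy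
          rw [lsmul, slie, lself, smul_zero, smul_zero]
          exact Submodule.zero_mem _
  · -- injectivity of the parameterization
    intro t s ht hs hspan2
    have hmem : E + t • F ∈ Submodule.span ℂ {E + s • F} := by
      rw [← hspan2]
      exact Submodule.mem_span_singleton_self _
    obtain ⟨c, hc⟩ := Submodule.mem_span_singleton.mp hmem
    have he : (c - 1) • E + (c * s - t) • F = 0 := by
      have h0 : c • (E + s • F) - (E + t • F) = 0 := by rw [hc, sub_self]
      calc (c - 1) • E + (c * s - t) • F
          = c • (E + s • F) - (E + t • F) := by
            rw [smul_add, smul_smul, sub_smul, sub_smul, one_smul]; abel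
        _ = 0 := h0
    obtain ⟨h1, h2⟩ := hEF2 _ _ he
    linear_combination s * h1 - h2
  · -- standard iff t = 0
    intro t ht
    constructor
    · intro hstd
      have hZk : Z ∈ kSub (⊥ : LieSubalgebra ℝ g) Z := by
        rw [kSub_bot]
        exact Submodule.mem_span_singleton_self Z
      have h3 := hstd Z hZk (E + t • F) (Submodule.mem_span_singleton_self _)
      obtain ⟨c, hc⟩ := Submodule.mem_span_singleton.mp h3
      have hbr : ⁅inclL Z, E + t • F⁆
          = (Complex.I * 2) • E + (Complex.I * t * (-2)) • F := by
        rw [hZ, slie, ladd, lsmul, hHE, hHF, smul_add, smul_smul, smul_smul, smul_smul]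
      rw [hbr] at hc
      have he : (c - Complex.I * 2) • E + (c * t - Complex.I * t * (-2)) • F = 0 := by
        have h0 : c • (E + t • F) -
            ((Complex.I * 2) • E + (Complex.I * t * (-2)) • F) = 0 := by
          rw [hc, sub_self]
        calc (c - Complex.I * 2) • E + (c * t - Complex.I * t * (-2)) • F
            = c • (E + t • F) -
              ((Complex.I * 2) • E + (Complex.I * t * (-2)) • F) := by
              rw [smul_add, smul_smul, sub_smul, sub_smul]; abel
          _ = 0 := h0
      obtain ⟨h1, h2⟩ := hEF2 _ _ he
      have h4 : (Complex.I * 4) * t = 0 := by linear_combination h2 - t * h1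
      have h5 : (Complex.I * 4 : ℂ) ≠ 0 := by simp [Complex.I_ne_zero]
      exact (mul_eq_zero.mp h4).resolve_left h5
    · rintro rfl
      intro x hx v hv
      rw [kSub_bot] at hx
      obtain ⟨r, rfl⟩ := Submodule.mem_span_singleton.mp hx
      obtain ⟨c, rfl⟩ := Submodule.mem_span_singleton.mp hv
      have hbr0 : ⁅H, E + (0 : ℂ) • F⁆ = (2 : ℂ) • (E + (0 : ℂ) • F) := by
        rw [zero_smul, add_zero, hHE]
      have h1 : ⁅inclL (r • Z), c • (E + (0 : ℂ) • F)⁆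
          = (algebraMap ℝ ℂ r) • (c • (Complex.I • ((2 : ℂ) • (E + (0 : ℂ) • F)))) := by
        rw [map_smul, ← algebraMap_smul ℂ r (inclL Z), slie, lsmul, hZ, slie, hbr0]
      rw [h1]
      exact Submodule.smul_mem _ _ (Submodule.smul_mem _ _ (Submodule.smul_mem _ _
        (Submodule.smul_mem _ _ (Submodule.mem_span_singleton_self _))))

end CRPaper
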